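/- Let ε ∈ ℝ and let (x,y,x̃,ỹ) ∈ ℝ⁴ satisfy x̃ − x = ε(x̃x − ỹy) and ỹ − y = −ε(x̃y + xỹ). Assume 1 − ε²(x² + y²) ≠ 0 and 1 − ε²(x̃² + ỹ²) ≠ 0. Then ỹ(3x̃² − ỹ²)/(1 − ε²(x̃² + ỹ²)) = y(3x² − y²)/(1 − ε²(x² + y²)), i.e. H(ε) = y(3x² − y²)/(1 − ε²(x² + y²)) is a conserved quantity. -/
import Mathlib


/-- Conserved quantity of the Hirota–Kimura discretization of the reduced Nahm
equations with tetrahedral symmetry `ẋ = x² - y²`, `ẏ = -2xy`. -/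
theorem nahm_tetrahedral_kahan_integral (ε x y xt yt : ℝ)
    (h1 : xt - x = ε * (xt * x - yt * y))
    (h2 : yt - y = -(ε * (xt * y + x * yt)))
    (hd : 1 - ε ^ 2 * (x ^ 2 + y ^ 2) ≠ 0)
    (hdt : 1 - ε ^ 2 * (xt ^ 2 + yt ^ 2) ≠ 0) :
    yt * (3 * xt ^ 2 - yt ^ 2) / (1 - ε ^ 2 * (xt ^ 2 + yt ^ 2))
      = y * (3 * x ^ 2 - y ^ 2) / (1 - ε ^ 2 * (x ^ 2 + y ^ 2)) := by
  have hA1 : xt * (1 - ε ^ 2 * (x ^ 2 + y ^ 2)) = x + ε * (x ^ 2 - y ^ 2) := by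
    linear_combination (1 + ε * x) * h1 - ε * y * h2
  have hA2 : yt * (1 - ε ^ 2 * (x ^ 2 + y ^ 2)) = y - 2 * ε * x * y := by
    linear_combination (1 - ε * x) * h2 - ε * y * h1
  have hB : (1 - ε ^ 2 * (xt ^ 2 + yt ^ 2)) * (1 - ε ^ 2 * (x ^ 2 + y ^ 2)) ^ 2
      = 1 - 3 * ε ^ 2 * (x ^ 2 + y ^ 2) - 2 * ε ^ 3 * (x ^ 3 - 3 * x * y ^ 2) := by
    linear_combination
      (-(ε ^ 2)) * ((xt * (1 - ε ^ 2 * (x ^ 2 + y ^ 2)) + (x + ε * (x ^ 2 - y ^ 2))) * hA1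
        + (yt * (1 - ε ^ 2 * (x ^ 2 + y ^ 2)) + (y - 2 * ε * x * y)) * hA2)
  rw [div_eq_div_iff hdt hd]
  apply mul_left_cancel₀ (pow_ne_zero 3 hd)
  linear_combination
    (3 * (1 - ε ^ 2 * (x ^ 2 + y ^ 2)) * (xt * (1 - ε ^ 2 * (x ^ 2 + y ^ 2))) ^ 2
      - (1 - ε ^ 2 * (x ^ 2 + y ^ 2)) * ((yt * (1 - ε ^ 2 * (x ^ 2 + y ^ 2))) ^ 2
        + yt * (1 - ε ^ 2 * (x ^ 2 + y ^ 2)) * (y - 2 * ε * x * y)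
        + (y - 2 * ε * x * y) ^ 2)) * hA2
    + 3 * (1 - ε ^ 2 * (x ^ 2 + y ^ 2)) * (y - 2 * ε * x * y)
        * (xt * (1 - ε ^ 2 * (x ^ 2 + y ^ 2)) + (x + ε * (x ^ 2 - y ^ 2))) * hA1
    - y * (3 * x ^ 2 - y ^ 2) * (1 - ε ^ 2 * (x ^ 2 + y ^ 2)) * hB
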